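/- If I is monotone, extensive, and idempotent (a closure operator on sets of facts), then the onto-neighborhood relation on saturated databases, for d_b paired with the symmetric-difference distance, is characterized as: saturated D, D' are onto-neighbors iff there exist facts a, b and a set D0 with D = I(D0 ∪ {a}) and D' = I(D0 ∪ {b}) where a ∉ D0 and b ∉ D0. -/
import Mathlib


/-- The paired bounded relation for the symmetric-difference distance on finite sets. -/
def dbRel {α : Type*} [DecidableEq α] (D1 D2 : Finset α) : Prop :=
  ∃ D0 : Finset α, D0 ⊆ D1 ∧ (D1 \ D0).card = 1 ∧ D0 ⊆ D2 ∧ (D2 \ D0).card = 1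

/-- `(I, d_b)`-onto neighborhood: antecedents at bounded distance 1. -/
def ontoNbr {α : Type*} [DecidableEq α] (I : Finset α → Finset α) (D D' : Finset α) : Prop :=
  ∃ Dm Dm' : Finset α, I Dm = D ∧ I Dm' = D' ∧ dbRel Dm Dm'

/-- For a closure operator `I` (monotone, extensive, idempotent) and `d_b` paired with
the symmetric-difference distance, two saturated databases are onto-neighbors iff they
are the closures of `D0 ∪ {a}` and `D0 ∪ {b}` for some set `D0` and facts `a, b ∉ D0`. -/
theorem stmt19 {α : Type*} [DecidableEq α] (I : Finset α → Finset α)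
    (hmono : ∀ D D' : Finset α, D ⊆ D' → I D ⊆ I D')
    (hext : ∀ D : Finset α, D ⊆ I D)
    (hidem : ∀ D : Finset α, I (I D) = I D)
    (D D' : Finset α) (hD : I D = D) (hD' : I D' = D') :
    ontoNbr I D D' ↔
      ∃ (D0 : Finset α) (a b : α), a ∉ D0 ∧ b ∉ D0 ∧
        D = I (insert a D0) ∧ D' = I (insert b D0) := by
  constructor
  · rintro ⟨Dm, Dm', hm, hm', D0, h1, h2, h3, h4⟩
    obtain ⟨a, ha⟩ := Finset.card_eq_one.mp h2
    obtain ⟨b, hb⟩ := Finset.card_eq_one.mp h4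
    have hane : a ∉ D0 := by
      have : a ∈ Dm \ D0 := ha ▸ Finset.mem_singleton_self a
      exact (Finset.mem_sdiff.mp this).2
    have hbne : b ∉ D0 := by
      have : b ∈ Dm' \ D0 := hb ▸ Finset.mem_singleton_self b
      exact (Finset.mem_sdiff.mp this).2
    have hDm : Dm = insert a D0 := by
      ext x
      constructor
      · intro hx
        by_cases hx0 : x ∈ D0
        · exact Finset.mem_insert_of_mem hx0
        · have : x ∈ Dm \ D0 := Finset.mem_sdiff.mpr ⟨hx, hx0⟩
          rw [ha, Finset.mem_singleton] at this
          exact this ▸ Finset.mem_insert_self a D0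
      · intro hx
        rcases Finset.mem_insert.mp hx with hxa | hx0
        · have hmem : a ∈ Dm \ D0 := ha ▸ Finset.mem_singleton_self a
          exact hxa ▸ (Finset.mem_sdiff.mp hmem).1
        · exact h1 hx0
    have hDm' : Dm' = insert b D0 := by
      ext x
      constructor
      · intro hx
        by_cases hx0 : x ∈ D0
        · exact Finset.mem_insert_of_mem hx0
        · have : x ∈ Dm' \ D0 := Finset.mem_sdiff.mpr ⟨hx, hx0⟩
          rw [hb, Finset.mem_singleton] at this
          exact this ▸ Finset.mem_insert_self b D0
      · intro hx
        rcases Finset.mem_insert.mp hx with hxb | hx0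
        · have hmem : b ∈ Dm' \ D0 := hb ▸ Finset.mem_singleton_self b
          exact hxb ▸ (Finset.mem_sdiff.mp hmem).1
        · exact h3 hx0
    exact ⟨D0, a, b, hane, hbne, by rw [← hm, hDm], by rw [← hm', hDm']⟩
  · rintro ⟨D0, a, b, ha, hb, hDa, hDb⟩
    refine ⟨insert a D0, insert b D0, hDa.symm, hDb.symm, D0,
      Finset.subset_insert _ _, ?_, Finset.subset_insert _ _, ?_⟩
    · rw [Finset.insert_sdiff_of_notMem _ ?_] <;>
        simp [ha, Finset.sdiff_self]
    · rw [Finset.insert_sdiff_of_notMem _ ?_] <;>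
        simp [hb, Finset.sdiff_self]
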